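/- Let K be a field and let i, j ∈ ℤ. If D_i, D_j, D are K-linear derivations of LaurentPolynomial K with D_i t = t^{i+1}, D_j t = t^{j+1} and D t = t^{i+j+1}, then ⁅D_i, D_j⁆ = (((j − i : ℤ) : K)) • D. (The multiplication rule [e_i, e_j] = (j − i) e_{i+j} holds in U_1.) -/

import Mathlib

open LaurentPolynomial

variable (K : Type*) [Field K]

/-! A derivation `D` of `R[T;T⁻¹]` is determined by `D t`, because `D (t^n) = n t^(n-1) D t`
for all `n : ℤ` (for `n < 0` by differentiating `t^n t^(-n) = 1`). So both sides of the bracket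
identity only need to be compared at `t`, where
`⁅D_i, D_j⁆ t = D_i (t^(j+1)) - D_j (t^(i+1)) = ((j + 1) - (i + 1)) t^(i+j+1)`. -/

namespace LaurentPolynomial

variable {R M : Type*} [CommRing R] [AddCommGroup M] [Module R[T;T⁻¹] M] [Module R M]

theorem derivation_T_natCast (D : Derivation R R[T;T⁻¹] M) (n : ℕ) :
    D (T n) = n • (T (n - 1) : R[T;T⁻¹]) • D (T 1) := by
  rcases n with _ | k
  · simp
  · rw [← mul_one ((k + 1 : ℕ) : ℤ), ← T_pow, D.leibniz_pow, T_pow]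
    push_cast
    ring_nf

theorem derivation_T (D : Derivation R R[T;T⁻¹] M) (n : ℤ) :
    D (T n) = n • (T (n - 1) : R[T;T⁻¹]) • D (T 1) := by
  obtain ⟨m, rfl | rfl⟩ := n.eq_nat_or_neg
  · simpa using derivation_T_natCast D m
  · have hinv : (T (-m) : R[T;T⁻¹]) * T m = 1 := by rw [← T_add, neg_add_cancel, T_zero]
    rw [D.leibniz_of_mul_eq_one hinv, derivation_T_natCast, T_pow, smul_comm _ m, neg_smul,
      smul_smul, ← T_add, neg_smul, smul_neg, natCast_zsmul]
    ring_nf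

theorem derivation_ext [IsScalarTower R R[T;T⁻¹] M] {D₁ D₂ : Derivation R R[T;T⁻¹] M}
    (h : D₁ (T 1) = D₂ (T 1)) : D₁ = D₂ := by
  refine Derivation.ext fun p => ?_
  induction p using LaurentPolynomial.induction_on' with
  | add p q hp hq => rw [map_add, map_add, hp, hq]
  | C_mul_T n a =>
    simp only [C_eq_algebraMap, Derivation.leibniz, Derivation.map_algebraMap, smul_zero,
      add_zero]
    rw [derivation_T D₁, derivation_T D₂, h]

end LaurentPolynomial

/-- Eq. (2.2): the multiplication rule `[e_i, e_j] = (j - i) e_{i+j}` in `U_1`, where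
`e_n` is the derivation of `K[t,t⁻¹]` with `e_n t = t^{n+1}`. -/
theorem bracket_basis_derivations (i j : ℤ)
    (Di Dj D : Derivation K (LaurentPolynomial K) (LaurentPolynomial K))
    (hi : Di (T 1) = T (i + 1)) (hj : Dj (T 1) = T (j + 1))
    (hD : D (T 1) = T (i + j + 1)) :
    ⁅Di, Dj⁆ = ((j - i : ℤ) : K) • D := by
  refine derivation_ext ?_
  rw [Derivation.commutator_apply, Derivation.smul_apply, hi, hj, hD, derivation_T Di,
    derivation_T Dj, hi, hj, smul_eq_mul, smul_eq_mul, ← T_add, ← T_add,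
    Int.cast_smul_eq_zsmul, sub_smul]
  ring_nf
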